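/- arXiv:1703.01721 — 4 statements merged into one kernel-verified Lean document; each statement's English description precedes it below -/
import Mathlib

section
/- For all x ≥ 0, the inequality 9·h₀(x/3) ≤ 9·h₁(x/3) ≤ h(1+x) holds. -/
noncomputable def h (x : ℝ) : ℝ := x * (Real.log x - 1) + 1
noncomputable def h₁ (x : ℝ) : ℝ := 1 + x - Real.sqrt (1 + 2 * x)
noncomputable def h₀ (x : ℝ) : ℝ := x ^ 2 / (2 * (1 + x))

/-!
Put `y = x / 3` and `s = √(1 + 2y)`. The left inequality `h₀ y ≤ h₁ y` is `(s - 1)⁴ ≥ 0` after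
clearing denominators. For the right one, `9 h₁ y` and `h (1 + 3y)` vanish at `y = 0` together
with their first derivatives, and their second derivatives are `9 / (1 + 2y)^(3/2)` and
`9 / (1 + 3y)`; comparing them is `1 + 3y ≤ s³`, i.e. `(s - 1)² (2s + 1) ≥ 0`. Integrating the
comparison twice gives the claim.
-/

open Real

theorem le_of_hasDerivAt_le_of_le {f g f' g' : ℝ → ℝ} {a x : ℝ}
    (hf : ∀ y, a ≤ y → HasDerivAt f (f' y) y) (hg : ∀ y, a ≤ y → HasDerivAt g (g' y) y)
    (ha : f a ≤ g a) (hd : ∀ y, a ≤ y → f' y ≤ g' y) (hx : a ≤ x) : f x ≤ g x :=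
  image_le_of_deriv_right_le_deriv_boundary
    (fun y hy => (hf y hy.1).continuousAt.continuousWithinAt)
    (fun y hy => (hf y hy.1).hasDerivWithinAt) ha
    (fun y hy => (hg y hy.1).continuousAt.continuousWithinAt)
    (fun y hy => (hg y hy.1).hasDerivWithinAt) (fun y hy => hd y hy.1) ⟨hx, le_rfl⟩

theorem HasDerivAt.comp_const_add_const_mul {f : ℝ → ℝ} {f' a b y : ℝ}
    (hf : HasDerivAt f f' (a + b * y)) : HasDerivAt (fun y => f (a + b * y)) (b * f') y := by
  have hlin : HasDerivAt (fun y => a + b * y) b y := by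
    simpa using ((hasDerivAt_id y).const_mul b).const_add a
  exact (hf.comp y hlin).congr_deriv (mul_comm _ _)

theorem hasDerivAt_h {u : ℝ} (hu : 0 < u) : HasDerivAt h (log u) u := by
  have := ((hasDerivAt_id' u).mul ((hasDerivAt_log hu.ne').sub_const 1)).add_const 1
  refine this.congr_deriv ?_
  field_simp
  ring

theorem hasDerivAt_sqrt_one_add_two_mul {y : ℝ} (hy : -1 / 2 < y) :
    HasDerivAt (fun y => √(1 + 2 * y)) (√(1 + 2 * y))⁻¹ y := by
  refine (hasDerivAt_sqrt (by linarith : 1 + 2 * y ≠ 0)).comp_const_add_const_mul.congr_deriv ?_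
  field_simp

theorem hasDerivAt_h₁ {y : ℝ} (hy : -1 / 2 < y) :
    HasDerivAt h₁ (1 - (√(1 + 2 * y))⁻¹) y :=
  ((hasDerivAt_id' y).const_add 1).sub (hasDerivAt_sqrt_one_add_two_mul hy)

theorem hasDerivAt_one_sub_inv_sqrt_one_add_two_mul {y : ℝ} (hy : -1 / 2 < y) :
    HasDerivAt (fun y => 1 - (√(1 + 2 * y))⁻¹) ((1 + 2 * y) * √(1 + 2 * y))⁻¹ y := by
  have hpos : 0 < √(1 + 2 * y) := sqrt_pos.2 (by linarith)
  refine (((hasDerivAt_sqrt_one_add_two_mul hy).inv hpos.ne').const_sub 1).congr_deriv ?_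
  rw [sq_sqrt (by linarith)]
  field_simp

theorem h₀_le_h₁ {y : ℝ} (hy : -1 / 2 ≤ y) : h₀ y ≤ h₁ y := by
  set s := √(1 + 2 * y)
  have hs : s ^ 2 = 1 + 2 * y := sq_sqrt (by linarith)
  have key : h₁ y * (2 * (1 + y)) - y ^ 2 = (s - 1) ^ 4 / 4 := by
    rw [h₁]
    linear_combination -(s ^ 2 + 2 * y - 4 * s + 7) / 4 * hs
  rw [h₀, div_le_iff₀ (by linarith)]
  nlinarith [pow_two_nonneg ((s - 1) ^ 2)]

theorem one_add_three_mul_le_mul_sqrt {y : ℝ} (hy : -1 / 2 ≤ y) :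
    1 + 3 * y ≤ (1 + 2 * y) * √(1 + 2 * y) := by
  set s := √(1 + 2 * y)
  have hs : s ^ 2 = 1 + 2 * y := sq_sqrt (by linarith)
  nlinarith [mul_nonneg (sq_nonneg (s - 1)) (by positivity : 0 ≤ 2 * s + 1)]

theorem three_mul_one_sub_inv_sqrt_le_log {y : ℝ} (hy : 0 ≤ y) :
    3 * (1 - (√(1 + 2 * y))⁻¹) ≤ log (1 + 3 * y) := by
  refine le_of_hasDerivAt_le_of_le (g := fun y => log (1 + 3 * y))
    (fun y hy => (hasDerivAt_one_sub_inv_sqrt_one_add_two_mul (by linarith)).const_mul 3)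
    (fun y hy => (hasDerivAt_log (by linarith : 0 < 1 + 3 * y).ne').comp_const_add_const_mul)
    (by simp) (fun y hy => ?_) hy
  gcongr
  exact one_add_three_mul_le_mul_sqrt (by linarith)

theorem nine_mul_h₁_le_h_one_add_three_mul {y : ℝ} (hy : 0 ≤ y) :
    9 * h₁ y ≤ h (1 + 3 * y) := by
  refine le_of_hasDerivAt_le_of_le (g := fun y => h (1 + 3 * y))
    (fun y hy => (hasDerivAt_h₁ (by linarith)).const_mul 9)
    (fun y hy => (hasDerivAt_h (by linarith)).comp_const_add_const_mul)
    (by simp [h, h₁]) (fun y hy => ?_) hy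
  linarith [three_mul_one_sub_inv_sqrt_le_log hy]

theorem nine_h0_le_nine_h1_le_h (x : ℝ) (hx : 0 ≤ x) :
    9 * h₀ (x / 3) ≤ 9 * h₁ (x / 3) ∧ 9 * h₁ (x / 3) ≤ h (1 + x) := by
  refine ⟨by gcongr; exact h₀_le_h₁ (by linarith), ?_⟩
  have key := nine_mul_h₁_le_h_one_add_three_mul (y := x / 3) (by positivity)
  rwa [mul_div_cancel₀ x three_ne_zero] at key
end

section
/- For all z > 0, W(z) ≥ (1/2)·(1 + log z), where W is the principal branch of the Lambert W function satisfying W(z)·e^{W(z)} = z. -/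
open Real

/-- Since `log (w * exp w) = log w + w`, this is `log w ≤ w - 1`. -/
theorem one_add_log_mul_exp_le_two_mul {w : ℝ} (hw : 0 < w) :
    1 + log (w * exp w) ≤ 2 * w := by
  rw [log_mul hw.ne' (exp_pos w).ne', log_exp]
  linarith [log_le_sub_one_of_pos hw]

theorem lambertW_lower_bound (W : ℝ → ℝ)
    (hW : ∀ z : ℝ, 0 ≤ z → 0 ≤ W z ∧ W z * Real.exp (W z) = z) :
    ∀ z : ℝ, 0 < z → W z ≥ (1 / 2) * (1 + Real.log z) := by
  intro z hz
  obtain ⟨hW_nonneg, hW_eq⟩ := hW z hz.le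
  have hW_pos : 0 < W z := by
    refine hW_nonneg.lt_of_ne fun h => hz.ne ?_
    rw [← hW_eq, ← h, zero_mul]
  have hbound := one_add_log_mul_exp_le_two_mul hW_pos
  rw [hW_eq] at hbound
  linarith
end

section
/- For all y > 1 + e, h⁻¹(y) ≤ 2·(y−1)/log(y−1), where h⁻¹ is the inverse of h(x) = x(log x − 1) + 1 restricted to [1,∞). -/
lemma h_strictMonoOn : StrictMonoOn h (Set.Ici 1) := by
  apply strictMonoOn_of_deriv_pos (convex_Ici 1)
  · apply ContinuousOn.add _ continuousOn_const
    apply ContinuousOn.mul continuousOn_id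
    apply ContinuousOn.sub _ continuousOn_const
    exact Real.continuousOn_log.mono (by intro x hx; simp at hx ⊢; linarith)
  · intro x hx
    rw [interior_Ici] at hx
    have hx1 : (1:ℝ) < x := hx
    have hx0 : x ≠ 0 := by positivity
    have hd : HasDerivAt h (Real.log x) x := by
      have h1 : HasDerivAt (fun x : ℝ => x * (Real.log x - 1))
          (1 * (Real.log x - 1) + x * x⁻¹) x :=
        (hasDerivAt_id x).mul ((Real.hasDerivAt_log hx0).sub_const 1)
      have h2 := h1.add_const 1
      convert h2 using 1
      case e'_4 => rfl
      case e'_5 => rfl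
      case e'_8 => rfl
      rw [mul_inv_cancel₀ hx0]; ring
    rw [hd.deriv]
    exact Real.log_pos hx1

theorem h_inverse_upper_bound (g : ℝ → ℝ)
    (hg : ∀ y : ℝ, 0 ≤ y → 1 ≤ g y ∧ h (g y) = y) :
    ∀ y : ℝ, 1 + Real.exp 1 < y → g y ≤ 2 * (y - 1) / Real.log (y - 1) := by
  intro y hy
  have he : (0:ℝ) < Real.exp 1 := Real.exp_pos 1
  obtain ⟨hg1, hgy⟩ := hg y (by linarith)
  set t := y - 1 with htdef
  have ht : Real.exp 1 < t := by simp [htdef]; linarith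
  have htpos : (0:ℝ) < t := lt_trans he ht
  set L := Real.log t with hLdef
  have hL : 1 < L := (Real.lt_log_iff_exp_lt htpos).2 ht
  have hL0 : (0:ℝ) < L := by linarith
  set x₀ := 2 * t / L with hx₀def
  have hx₀pos : 0 < x₀ := by positivity
  have hlogt : L ≤ t - 1 := Real.log_le_sub_one_of_pos htpos
  have hx₀1 : (1:ℝ) ≤ x₀ := by
    rw [hx₀def, le_div_iff₀ hL0]
    linarith
  have hlogx₀ : Real.log x₀ = Real.log 2 + L - Real.log L := by
    rw [hx₀def, Real.log_div (by positivity) (ne_of_gt hL0),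
      Real.log_mul (by norm_num) (ne_of_gt htpos)]
  have hlogL : Real.log L ≤ L / 2 - 1 + Real.log 2 := by
    have := Real.log_le_sub_one_of_pos (show (0:ℝ) < L / 2 by linarith)
    rw [Real.log_div (ne_of_gt hL0) (by norm_num)] at this
    linarith
  have hkey : y ≤ h x₀ := by
    rw [show h x₀ = x₀ * (Real.log x₀ - 1) + 1 from rfl, hlogx₀]
    have h2 : 2 * (Real.log 2 + L - Real.log L - 1) ≥ L := by linarith
    have : x₀ * (Real.log 2 + L - Real.log L - 1) ≥ t := by
      rw [hx₀def, div_mul_eq_mul_div, ge_iff_le, le_div_iff₀ hL0]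
      nlinarith
    linarith [this]
  by_contra hlt
  push_neg at hlt
  have := h_strictMonoOn (Set.mem_Ici.2 hx₀1) (Set.mem_Ici.2 hg1) hlt
  rw [hgy] at this
  linarith
end

section
/- Let c > √2 and 0 ≤ y ≤ 9·(c²/2 − 1)²/c². Then h₂⁻¹(y) ≤ c·√y, where h₂⁻¹ is the inverse of h₂(x) = (1+x)log(1+x) − x on [0,∞). -/
noncomputable def h₂ (x : ℝ) : ℝ := (1 + x) * Real.log (1 + x) - x

noncomputable def φaux (x : ℝ) : ℝ :=
  Real.log (1 + x) - (6 * x + 5 * x ^ 2) / (2 * (1 + x) * (3 + x))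

lemma φaux_hasDerivAt {x : ℝ} (hx : 0 ≤ x) :
    HasDerivAt φaux (x ^ 3 / ((1 + x) ^ 2 * (3 + x) ^ 2)) x := by
  have h1 : (1 : ℝ) + x ≠ 0 := by positivity
  have h3 : (3 : ℝ) + x ≠ 0 := by positivity
  have hlog : HasDerivAt (fun y : ℝ => Real.log (1 + y)) ((1 + x)⁻¹ * 1) x := by
    exact (Real.hasDerivAt_log h1).comp x ((hasDerivAt_id x).const_add 1)
  have hnum : HasDerivAt (fun y : ℝ => 6 * y + 5 * y ^ 2) (6 + 5 * (2 * x)) x := by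
    have := ((hasDerivAt_id x).const_mul 6).add (((hasDerivAt_pow 2 x)).const_mul 5)
    exact this.congr_deriv (by norm_num)
  have hden : HasDerivAt (fun y : ℝ => 2 * (1 + y) * (3 + y))
      (2 * (3 + x) + 2 * (1 + x)) x := by
    have ha : HasDerivAt (fun y : ℝ => 2 * (1 + y)) 2 x := by
      simpa using ((hasDerivAt_id x).const_add 1).const_mul 2
    have hb : HasDerivAt (fun y : ℝ => 3 + y) 1 x := (hasDerivAt_id x).const_add 3
    have := ha.mul hb
    refine this.congr_deriv ?_
    ring
  have hdenne : 2 * (1 + x) * (3 + x) ≠ 0 := by positivity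
  have hdiv := hnum.div hden hdenne
  have := hlog.sub hdiv
  refine this.congr_deriv ?_
  field_simp
  ring

lemma φaux_nonneg {x : ℝ} (hx : 0 ≤ x) : 0 ≤ φaux x := by
  have hmono : MonotoneOn φaux (Set.Ici (0 : ℝ)) := by
    apply monotoneOn_of_deriv_nonneg (convex_Ici 0)
    · apply ContinuousOn.sub
      · apply ContinuousOn.log (by fun_prop)
        intro y hy
        have h : (0:ℝ) ≤ y := hy
        intro h0; linarith
      · apply ContinuousOn.div (by fun_prop) (by fun_prop)
        intro y hy
        have h : (0:ℝ) ≤ y := hy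
        have : (0:ℝ) < 2 * (1 + y) * (3 + y) := by nlinarith
        linarith
    · intro y hy
      rw [interior_Ici] at hy
      exact (φaux_hasDerivAt (le_of_lt hy)).differentiableAt.differentiableWithinAt
    · intro y hy
      rw [interior_Ici] at hy
      rw [(φaux_hasDerivAt (le_of_lt hy)).deriv]
      exact div_nonneg (pow_nonneg (le_of_lt hy) 3) (by positivity)
  have h0 : φaux 0 = 0 := by
    simp [φaux]
  have := hmono (Set.self_mem_Ici) (by exact hx : x ∈ Set.Ici (0:ℝ)) hx
  linarith [h0 ▸ this]

lemma h2_lower {x : ℝ} (hx : 0 ≤ x) : 3 * x ^ 2 / (2 * (3 + x)) ≤ h₂ x := by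
  have h := φaux_nonneg hx
  have h1 : (0:ℝ) < 1 + x := by positivity
  have h3 : (0:ℝ) < 3 + x := by positivity
  have key : h₂ x - 3 * x ^ 2 / (2 * (3 + x)) = (1 + x) * φaux x := by
    unfold h₂ φaux
    field_simp
    ring
  nlinarith [mul_nonneg (le_of_lt h1) h]

lemma h2_strictMonoOn : StrictMonoOn h₂ (Set.Ici (0 : ℝ)) := by
  apply strictMonoOn_of_deriv_pos (convex_Ici 0)
  · apply ContinuousOn.sub
    · apply ContinuousOn.mul (by fun_prop)
      apply ContinuousOn.log (by fun_prop)
      intro y hy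
      have h : (0:ℝ) ≤ y := hy
      intro h0; linarith
    · fun_prop
  · intro x hx
    rw [interior_Ici] at hx
    have hx' : (0:ℝ) < x := hx
    have h1 : (1:ℝ) + x ≠ 0 := by intro h0; linarith
    have hd : HasDerivAt h₂ (Real.log (1 + x)) x := by
      have hlog : HasDerivAt (fun y : ℝ => Real.log (1 + y)) ((1 + x)⁻¹ * 1) x :=
        (Real.hasDerivAt_log h1).comp x ((hasDerivAt_id x).const_add 1)
      have hmul := (((hasDerivAt_id x).const_add 1).mul hlog)
      have := hmul.sub (hasDerivAt_id x)
      refine this.congr_deriv ?_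
      field_simp
      simp only [id]
      ring
    rw [hd.deriv]
    apply Real.log_pos
    have : (0:ℝ) < x := hx
    linarith

theorem h2_inverse_gaussian_bound (g : ℝ → ℝ)
    (hg : ∀ y : ℝ, 0 ≤ y → 0 ≤ g y ∧ h₂ (g y) = y)
    (c : ℝ) (hc : Real.sqrt 2 < c) :
    ∀ y : ℝ, 0 ≤ y → y ≤ 9 * (c ^ 2 / 2 - 1) ^ 2 / c ^ 2 → g y ≤ c * Real.sqrt y := by
  intro y hy hle
  obtain ⟨hgy, hgval⟩ := hg y hy
  have hc0 : 0 < c := lt_of_le_of_lt (Real.sqrt_nonneg 2) hc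
  have hc2 : 2 < c ^ 2 := by
    have := Real.sq_sqrt (by norm_num : (2:ℝ) ≥ 0)
    nlinarith [Real.sqrt_nonneg 2]
  set s := Real.sqrt y with hs
  have hs0 : 0 ≤ s := Real.sqrt_nonneg y
  have hsy : s ^ 2 = y := Real.sq_sqrt hy
  -- bound on s
  have hsb : s ≤ 3 * (c ^ 2 - 2) / (2 * c) := by
    have hb0 : 0 ≤ 3 * (c ^ 2 - 2) / (2 * c) := by
      apply div_nonneg _ (by positivity)
      nlinarith
    have heq : (3 * (c ^ 2 - 2) / (2 * c)) ^ 2 = 9 * (c ^ 2 / 2 - 1) ^ 2 / c ^ 2 := by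
      field_simp
      ring
    have h2 : y ≤ (3 * (c ^ 2 - 2) / (2 * c)) ^ 2 := by rw [heq]; exact hle
    have := Real.sqrt_le_sqrt h2
    rwa [Real.sqrt_sq hb0] at this
  -- h₂ (c * s) ≥ y
  have hcs0 : 0 ≤ c * s := by positivity
  have hlow := h2_lower hcs0
  have hkey : y ≤ h₂ (c * s) := by
    have h3cs : (0:ℝ) < 3 + c * s := by positivity
    have hsb' : s * (2 * c) ≤ 3 * (c ^ 2 - 2) :=
      (le_div_iff₀ (by positivity : (0:ℝ) < 2 * c)).mp hsb
    have : y * (2 * (3 + c * s)) ≤ 3 * (c * s) ^ 2 := by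
      nlinarith [mul_le_mul_of_nonneg_left hsb' (sq_nonneg s), hsy, sq_nonneg s]
    have hq : y ≤ 3 * (c * s) ^ 2 / (2 * (3 + c * s)) := by
      rw [le_div_iff₀ (by positivity)]
      linarith
    linarith
  by_contra hcon
  push_neg at hcon
  have := h2_strictMonoOn (Set.mem_Ici.mpr hcs0) (Set.mem_Ici.mpr hgy) hcon
  rw [hgval] at this
  linarith
end
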